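/- Let $H$ and $H'$ be connected graphs on disjoint vertex sets $[n_1]$ and $[n_2]$ with $n_1 \geq 2$, $n_2 \geq 1$, and let $G = H \odot H'$ be their corona. Then $c_G(T) = |T| + 1$ for all $T \in \mathcal{C}(G)$ if and only if $H$ and $H'$ are both complete graphs. -/

import Mathlib

open SimpleGraph Set

/-- Number of connected components of the induced subgraph of `G` on `s`. -/
noncomputable def nc {V : Type*} (G : SimpleGraph V) (s : Set V) : ℕ :=
  Nat.card (G.induce s).ConnectedComponent

/-- `T` has the cut point property for `G`: every `i ∈ T` is a cut point of the
induced subgraph on `Tᶜ ∪ {i}` (removing `i` increases the number of components). -/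
def CutPointProperty {V : Type*} (G : SimpleGraph V) (T : Set V) : Prop :=
  ∀ i ∈ T, nc G (Tᶜ ∪ {i}) < nc G Tᶜ

/-- The join `G₁ * G₂` of two graphs on disjoint vertex sets. -/
def joinGraph {V₁ V₂ : Type*} (G₁ : SimpleGraph V₁) (G₂ : SimpleGraph V₂) :
    SimpleGraph (V₁ ⊕ V₂) where
  Adj v w :=
    match v, w with
    | Sum.inl a, Sum.inl b => G₁.Adj a b
    | Sum.inr a, Sum.inr b => G₂.Adj a b
    | Sum.inl _, Sum.inr _ => True
    | Sum.inr _, Sum.inl _ => True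
  symm := by constructor; rintro (a | a) (b | b) h <;> simp_all <;> exact h.symm
  loopless := by constructor; rintro (a | a) h <;> simp_all

/-- Disjoint union of an indexed family of graphs. -/
def sigmaGraph {ι : Type*} {V : ι → Type*} (G : ∀ i, SimpleGraph (V i)) :
    SimpleGraph (Σ i, V i) where
  Adj v w := ∃ h : v.1 = w.1, (G w.1).Adj (h ▸ v.2) w.2
  symm := by
    constructor
    rintro ⟨i, a⟩ ⟨j, b⟩ ⟨h, hab⟩
    dsimp at h hab ⊢
    subst h
    exact ⟨rfl, hab.symm⟩
  loopless := by
    constructor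
    rintro ⟨i, a⟩ ⟨h, hab⟩
    dsimp at h hab
    exact (G i).irrefl hab
/-- The corona `H ⊙ H'`: one copy of `H'` for each vertex `v` of `H`,
with every vertex of the copy joined to `v`. -/
def coronaGraph {V₁ V₂ : Type*} (H : SimpleGraph V₁) (H' : SimpleGraph V₂) :
    SimpleGraph (V₁ ⊕ V₁ × V₂) where
  Adj v w :=
    match v, w with
    | Sum.inl a, Sum.inl b => H.Adj a b
    | Sum.inl a, Sum.inr p => a = p.1
    | Sum.inr p, Sum.inl b => p.1 = b
    | Sum.inr p, Sum.inr q => p.1 = q.1 ∧ H'.Adj p.2 q.2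
  symm := by
    constructor
    rintro (a | p) (b | q) h <;> dsimp at h ⊢
    · exact h.symm
    · exact h.symm
    · exact h.symm
    · exact ⟨h.1.symm, h.2.symm⟩
  loopless := by constructor; rintro (a | p) h <;> simp_all

/-- The whisker graph `W(H)`: a pendant vertex attached to each vertex of `H`. -/
def whiskerGraph {V : Type*} (H : SimpleGraph V) : SimpleGraph (V ⊕ V) where
  Adj v w :=
    match v, w with
    | Sum.inl a, Sum.inl b => H.Adj a b
    | Sum.inl a, Sum.inr b => a = b
    | Sum.inr a, Sum.inl b => a = b
    | Sum.inr _, Sum.inr _ => False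
  symm := by constructor; rintro (a | a) (b | b) h <;> simp_all; exact h.symm
  loopless := by constructor; rintro (a | a) h <;> simp_all

/-- `F` is (the vertex set of) a maximal clique of `G`. -/
def MaxClique {V : Type*} (G : SimpleGraph V) (F : Set V) : Prop :=
  Maximal G.IsClique F

/-- A graph is chordal if every cycle of length at least 4 has a chord. -/
def IsChordal {V : Type*} (G : SimpleGraph V) : Prop :=
  ∀ (n : ℕ), 4 ≤ n → ∀ c : ℕ → V, Set.InjOn c (Set.Iio n) →
    (∀ i < n, G.Adj (c i) (c ((i + 1) % n))) →
    ∃ i < n, ∃ j < n, j ≠ i ∧ j ≠ (i + 1) % n ∧ i ≠ (j + 1) % n ∧ G.Adj (c i) (c j)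

/-- A generalized block graph: a connected chordal graph in which any three distinct
maximal cliques with nonempty common intersection have all pairwise intersections equal. -/
def GenBlockGraph {V : Type*} (G : SimpleGraph V) : Prop :=
  G.Connected ∧ IsChordal G ∧
    ∀ F₁ F₂ F₃ : Set V, MaxClique G F₁ → MaxClique G F₂ → MaxClique G F₃ →
      F₁ ≠ F₂ → F₁ ≠ F₃ → F₂ ≠ F₃ → (F₁ ∩ F₂ ∩ F₃).Nonempty →
      F₁ ∩ F₂ = F₁ ∩ F₃ ∧ F₁ ∩ F₂ = F₂ ∩ F₃

/-- `A` is a cut set of `G`: deleting `A` increases the number of connected components. -/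
def IsCutSet {V : Type*} (G : SimpleGraph V) (A : Set V) : Prop :=
  nc G Set.univ < nc G Aᶜ

/-- `A` is an inclusion-minimal cut set of `G`. -/
def IsMinCutSet {V : Type*} (G : SimpleGraph V) (A : Set V) : Prop :=
  IsCutSet G A ∧ ∀ B ⊂ A, ¬ IsCutSet G B

/-- `A` is a `t`-minimal cut set of `G`: a minimal cut set which is the common
intersection of exactly `t` maximal cliques of `G` and disjoint from all other
maximal cliques. -/
def IsTMinCut {V : Type*} (G : SimpleGraph V) (t : ℕ) (A : Set V) : Prop :=
  IsMinCutSet G A ∧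
  {F : Set V | MaxClique G F ∧ A ⊆ F}.ncard = t ∧
  ⋂₀ {F : Set V | MaxClique G F ∧ A ⊆ F} = A ∧
  ∀ F : Set V, MaxClique G F → ¬ A ⊆ F → F ∩ A = ∅

/-- `B` is a branch of the facet `F` in the clique complex of `G`. -/
def IsBranch {V : Type*} (G : SimpleGraph V) (F B : Set V) : Prop :=
  MaxClique G B ∧ B ≠ F ∧ ∀ H : Set V, MaxClique G H → H ≠ F → H ∩ F ⊆ B ∩ F

/-- `F` is a leaf of the clique complex of `G`. -/
def IsLeafClique {V : Type*} (G : SimpleGraph V) (F : Set V) : Prop :=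
  MaxClique G F ∧ ((∀ F' : Set V, MaxClique G F' → F' = F) ∨ ∃ B, IsBranch G F B)

/-!
Deleting `T` from `H ⊙ H'` leaves the components of `H` minus the deleted roots (each with the
copies hanging from it) and, for every deleted root, the components of its copy of `H'`
minus `T`.

If `H` and `H'` are complete, every vertex of a copy is simplicial, hence never a cut point, so
a set with the cut point property consists of roots, not all of them, and `c(T) = 1 + |T|`.
If `H` is not complete, a minimal separator `A` of two non-adjacent vertices of `H`, taken as a
set of roots, has the cut point property and `c(A) ≥ 2 + |A|`. If `H'` is not complete, take all
roots together with a minimal separator `B` of `H'` in every copy: then `c(T) = n₁ c_{H'}(B)`,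
while `|T| + 1 = n₁ (1 + |B|) + 1` is not divisible by `n₁ ≥ 2`.
-/

namespace SimpleGraph

variable {V β : Type*} {G : SimpleGraph V}

theorem Reachable.eq_of_forall_adj {f : V → β} (hf : ∀ ⦃u v⦄, G.Adj u v → f u = f v)
    {u v : V} (h : G.Reachable u v) : f u = f v := by
  obtain ⟨p⟩ := h
  induction p with
  | nil => rfl
  | cons h _ ih => exact (hf h).trans ih

def ConnectedComponent.liftOfAdj (f : V → β) (hf : ∀ ⦃u v⦄, G.Adj u v → f u = f v) :
    G.ConnectedComponent → β :=
  ConnectedComponent.lift f fun _ _ p _ => Reachable.eq_of_forall_adj hf ⟨p⟩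

theorem ConnectedComponent.liftOfAdj_surjective {f : V → β}
    (hf : ∀ ⦃u v⦄, G.Adj u v → f u = f v) (hsurj : Function.Surjective f) :
    Function.Surjective (liftOfAdj f hf) := fun b =>
  let ⟨v, hv⟩ := hsurj b
  ⟨G.connectedComponentMk v, hv⟩

theorem card_le_card_connectedComponent [Finite V] {f : V → β}
    (hf : ∀ ⦃u v⦄, G.Adj u v → f u = f v) (hsurj : Function.Surjective f) :
    Nat.card β ≤ Nat.card G.ConnectedComponent :=
  Nat.card_le_card_of_surjective _ (ConnectedComponent.liftOfAdj_surjective hf hsurj)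

theorem card_connectedComponent_eq {f : V → β} (hf : ∀ ⦃u v⦄, G.Adj u v → f u = f v)
    (hreach : ∀ ⦃u v⦄, f u = f v → G.Reachable u v) (hsurj : Function.Surjective f) :
    Nat.card G.ConnectedComponent = Nat.card β := by
  refine Nat.card_eq_of_bijective (ConnectedComponent.liftOfAdj f hf)
    ⟨fun c c' => ?_, ConnectedComponent.liftOfAdj_surjective hf hsurj⟩
  induction c using ConnectedComponent.ind
  induction c' using ConnectedComponent.ind
  exact fun h => ConnectedComponent.sound (hreach h)

end SimpleGraph

section Components

variable {α : Type*} {G : SimpleGraph α}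

theorem nc_empty (G : SimpleGraph α) : nc G ∅ = 0 := by
  simp [nc]

theorem nc_eq_one_of_connected {s : Set α} (h : (G.induce s).Connected) : nc G s = 1 :=
  Nat.card_eq_one_iff_unique.mpr
    ⟨h.preconnected.subsingleton_connectedComponent,
      h.nonempty.map (G.induce s).connectedComponentMk⟩

theorem nc_top {s : Set α} (hs : s.Nonempty) : nc (⊤ : SimpleGraph α) s = 1 := by
  have := hs.to_subtype
  exact nc_eq_one_of_connected (by rw [induce_top]; exact connected_top)

theorem one_le_nc [Finite α] {s : Set α} (hs : s.Nonempty) : 1 ≤ nc G s :=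
  have := hs.to_subtype
  Nat.card_pos

theorem one_lt_nc_of_not_reachable [Finite α] {s : Set α} {u v : s}
    (h : ¬ (G.induce s).Reachable u v) : 1 < nc G s :=
  Finite.one_lt_card_iff_nontrivial.mpr ⟨_, _, fun e => h (ConnectedComponent.exact e)⟩

theorem nc_union_singleton_lt [Finite α] {s : Set α} {x u v : α} (hu : u ∈ s) (hv : v ∈ s)
    (hreach : (G.induce (s ∪ {x})).Reachable ⟨u, .inl hu⟩ ⟨v, .inl hv⟩)
    (hnreach : ¬ (G.induce s).Reachable ⟨u, hu⟩ ⟨v, hv⟩) :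
    nc G (s ∪ {x}) < nc G s := by
  classical
  let φ := ConnectedComponent.map (G.induceHomOfLE (subset_union_left (s := s) (t := {x}))).toHom
  have hφ : ∀ w : s, φ (connectedComponentMk _ w) = connectedComponentMk _ ⟨w, .inl w.2⟩ :=
    fun _ => rfl
  have hsurj : Function.Surjective φ := by
    refine ConnectedComponent.ind fun ⟨w, hw⟩ => ?_
    rcases hw with hw | rfl
    · exact ⟨_, hφ ⟨w, hw⟩⟩
    obtain ⟨p⟩ := hreach
    by_cases hx : ⟨w, .inr rfl⟩ ∈ p.support
    · exact ⟨_, (hφ ⟨u, hu⟩).trans (ConnectedComponent.sound ⟨p.takeUntil _ hx⟩)⟩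
    -- a walk avoiding `x` already lies in `s`
    refine (hnreach ⟨(p.map (Embedding.induce _).toHom).induce s ?_⟩).elim
    intro z hz
    rw [Walk.support_map, List.mem_map] at hz
    obtain ⟨⟨z, hz | rfl⟩, hmem, rfl⟩ := hz
    · exact hz
    · exact (hx hmem).elim
  have hninj : ¬ Function.Injective φ := fun hinj => hnreach <| ConnectedComponent.exact <|
    hinj <| (hφ ⟨u, hu⟩).trans <| (ConnectedComponent.sound hreach).trans (hφ ⟨v, hv⟩).symm
  exact lt_of_not_ge fun hle => hninj (hsurj.bijective_of_nat_card_le hle).1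

theorem nc_le_nc_union_singleton [Finite α] {s : Set α} {x : α}
    (hx : G.IsClique (G.neighborSet x ∩ s)) : nc G s ≤ nc G (s ∪ {x}) := by
  by_cases hxs : x ∈ s
  · rw [union_singleton, insert_eq_of_mem hxs]
  rcases s.eq_empty_or_nonempty with rfl | ⟨w₀, hw₀⟩
  · simp [nc_empty]
  obtain ⟨u₀, hu₀, hN⟩ : ∃ u₀ ∈ s, ∀ w ∈ G.neighborSet x ∩ s, w = u₀ ∨ G.Adj w u₀ := by
    by_cases h : (G.neighborSet x ∩ s).Nonempty
    · obtain ⟨u₀, hu₀⟩ := h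
      exact ⟨u₀, hu₀.2, fun w hw => (eq_or_ne w u₀).imp_right (hx hw hu₀)⟩
    · exact ⟨w₀, hw₀, fun w hw => (h ⟨w, hw⟩).elim⟩
  classical
  -- `x` is sent to the component containing all its neighbours
  let f : ↥(s ∪ {x}) → (G.induce s).ConnectedComponent := fun w =>
    if hw : w.1 ∈ s then connectedComponentMk _ ⟨w, hw⟩ else connectedComponentMk _ ⟨u₀, hu₀⟩
  have hfx : ∀ w (hw : w ∈ s), G.Adj x w → f ⟨w, .inl hw⟩ = f ⟨x, .inr rfl⟩ := by
    intro w hw hadj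
    simp only [f, dif_pos hw, dif_neg hxs]
    rcases hN w ⟨hadj, hw⟩ with rfl | h
    · rfl
    · exact ConnectedComponent.sound (Adj.reachable (G := G.induce s) h)
  refine card_le_card_connectedComponent (f := f) ?_ fun c => ?_
  · rintro ⟨w, hw | rfl⟩ ⟨w', hw' | rfl⟩ (hadj : G.Adj _ _)
    · simp only [f, dif_pos hw, dif_pos hw']
      exact ConnectedComponent.sound (Adj.reachable (G := G.induce s) hadj)
    · exact hfx w hw hadj.symm
    · exact (hfx w' hw' hadj).symm
    · exact (hadj.ne rfl).elim
  · induction c using ConnectedComponent.ind with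
    | h w => exact ⟨⟨w, .inl w.2⟩, dif_pos w.2⟩

theorem CutPointProperty.not_isClique [Finite α] {T : Set α} (hT : CutPointProperty G T)
    {i : α} (hi : i ∈ T) : ¬ G.IsClique (G.neighborSet i ∩ Tᶜ) :=
  fun h => (hT i hi).not_ge (nc_le_nc_union_singleton h)

theorem exists_minimal_separator [Finite α] {a b : α} (hab : a ≠ b) (hadj : ¬ G.Adj a b) :
    ∃ (A : Set α) (ha : a ∉ A) (hb : b ∉ A), ¬ (G.induce Aᶜ).Reachable ⟨a, ha⟩ ⟨b, hb⟩ ∧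
      ∀ x ∈ A, (G.induce (Aᶜ ∪ {x})).Reachable ⟨a, .inl ha⟩ ⟨b, .inl hb⟩ := by
  let Separates (A : Set α) : Prop :=
    ∃ (ha : a ∉ A) (hb : b ∉ A), ¬ (G.induce Aᶜ).Reachable ⟨a, ha⟩ ⟨b, hb⟩
  have hN : Separates (G.neighborSet a) := by
    refine ⟨G.irrefl, hadj, ?_⟩
    rintro ⟨p⟩
    cases p with
    | nil => exact hab rfl
    | @cons _ w _ h _ => exact w.2 h
  obtain ⟨A, hA⟩ := exists_minimal_of_wellFoundedLT Separates ⟨_, hN⟩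
  obtain ⟨ha, hb, hsep⟩ := hA.prop
  refine ⟨A, ha, hb, hsep, fun x hx => ?_⟩
  have hx' : ¬ Separates (A \ {x}) := fun h =>
    (sdiff_singleton_ssubset.mpr hx).not_ge (hA.2 h sdiff_subset)
  simp only [Separates, not_exists, not_not] at hx'
  refine (hx' (fun h => ha h.1) (fun h => hb h.1)).map (G.induceHomOfLE ?_).toHom
  rw [compl_sdiff, union_comm]

end Components

section Corona

variable {V₁ V₂ : Type*} (H : SimpleGraph V₁) (H' : SimpleGraph V₂)

def coronaGraph.inlHom {s : Set V₁} {t : Set (V₁ ⊕ V₁ × V₂)} (h : ∀ a ∈ s, Sum.inl a ∈ t) :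
    H.induce s →g (coronaGraph H H').induce t where
  toFun a := ⟨Sum.inl a, h a a.2⟩
  map_rel' hab := hab

def coronaGraph.inrHom (a : V₁) {s : Set V₂} {t : Set (V₁ ⊕ V₁ × V₂)}
    (h : ∀ y ∈ s, Sum.inr (a, y) ∈ t) :
    H'.induce s →g (coronaGraph H H').induce t where
  toFun y := ⟨Sum.inr (a, y), h y y.2⟩
  map_rel' hyz := ⟨rfl, hyz⟩

open Classical in
/-- A complete invariant of the components of `(H ⊙ H') − T`: a vertex is labelled by its
component in `H − T` when its root survives, and otherwise by its component in its copy
of `H'` minus `T`. -/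
noncomputable def coronaLabel (T : Set (V₁ ⊕ V₁ × V₂)) :
    ↥Tᶜ → (H.induce {a | Sum.inl a ∉ T}).ConnectedComponent ⊕
      Σ a : {a // Sum.inl a ∈ T}, (H'.induce {y | Sum.inr (a.1, y) ∉ T}).ConnectedComponent
  | ⟨Sum.inl a, h⟩ => .inl (connectedComponentMk _ ⟨a, h⟩)
  | ⟨Sum.inr (a, y), h⟩ =>
    if ha : Sum.inl a ∈ T then .inr ⟨⟨a, ha⟩, connectedComponentMk _ ⟨y, h⟩⟩
    else .inl (connectedComponentMk _ ⟨a, ha⟩)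

noncomputable def coronaLabelRep (T : Set (V₁ ⊕ V₁ × V₂)) :
    (H.induce {a | Sum.inl a ∉ T}).ConnectedComponent ⊕
      (Σ a : {a // Sum.inl a ∈ T}, (H'.induce {y | Sum.inr (a.1, y) ∉ T}).ConnectedComponent) →
    ↥Tᶜ
  | .inl c => coronaGraph.inlHom H H' (fun _ h => h) c.out
  | .inr ⟨a, c⟩ => coronaGraph.inrHom H H' a.1 (fun _ h => h) c.out

variable {H H'} {T : Set (V₁ ⊕ V₁ × V₂)}

theorem coronaLabel_eq_of_adj ⦃u v : ↥Tᶜ⦄ (huv : ((coronaGraph H H').induce Tᶜ).Adj u v) :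
    coronaLabel H H' T u = coronaLabel H H' T v := by
  rcases u with ⟨a | ⟨a, y⟩, hu⟩ <;> rcases v with ⟨b | ⟨b, z⟩, hv⟩
  · exact congrArg Sum.inl (ConnectedComponent.sound (Adj.reachable huv))
  · obtain rfl : a = b := huv
    simp only [coronaLabel, dif_neg (show Sum.inl a ∉ T from hu)]
  · obtain rfl : a = b := huv
    simp only [coronaLabel, dif_neg (show Sum.inl a ∉ T from hv)]
  · obtain ⟨rfl, hyz⟩ : a = b ∧ H'.Adj y z := huv
    by_cases ha : Sum.inl a ∈ T
    · simp only [coronaLabel, dif_pos ha]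
      exact congrArg Sum.inr <| Sigma.ext rfl <| heq_of_eq <| ConnectedComponent.sound
        (Adj.reachable (G := H'.induce {y | Sum.inr (a, y) ∉ T}) (u := ⟨y, hu⟩) (v := ⟨z, hv⟩) hyz)
    · simp only [coronaLabel, dif_neg ha]

theorem coronaLabel_coronaLabelRep (i) : coronaLabel H H' T (coronaLabelRep H H' T i) = i := by
  rcases i with c | ⟨⟨a, ha⟩, c⟩
  · exact congrArg Sum.inl c.out_eq
  · exact (dif_pos ha).trans (congrArg Sum.inr (Sigma.ext rfl (heq_of_eq c.out_eq)))

theorem reachable_coronaLabelRep (u : ↥Tᶜ) :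
    ((coronaGraph H H').induce Tᶜ).Reachable u (coronaLabelRep H H' T (coronaLabel H H' T u)) := by
  have hinl (a : V₁) (ha : Sum.inl a ∉ T) :
      ((coronaGraph H H').induce Tᶜ).Reachable ⟨_, ha⟩ (coronaGraph.inlHom H H' (fun _ h => h)
        (connectedComponentMk (G := H.induce {a | Sum.inl a ∉ T}) ⟨a, ha⟩).out) := by
    have h := ConnectedComponent.exact
      (connectedComponentMk (G := H.induce {a | Sum.inl a ∉ T}) ⟨a, ha⟩).out_eq
    exact h.symm.map (coronaGraph.inlHom H H' (t := Tᶜ) fun _ h => h)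
  rcases u with ⟨a | ⟨a, y⟩, hu⟩
  · exact hinl a hu
  by_cases ha : Sum.inl a ∈ T
  · have hlabel : coronaLabel H H' T ⟨_, hu⟩ = Sum.inr ⟨⟨a, ha⟩, connectedComponentMk _ ⟨y, hu⟩⟩ :=
      dif_pos ha
    rw [hlabel]
    have h := ConnectedComponent.exact
      (connectedComponentMk (G := H'.induce {y | Sum.inr (a, y) ∉ T}) ⟨y, hu⟩).out_eq
    exact h.symm.map (coronaGraph.inrHom H H' a (t := Tᶜ) fun _ h => h)
  · have hlabel : coronaLabel H H' T ⟨_, hu⟩ = coronaLabel H H' T ⟨_, ha⟩ := dif_neg ha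
    rw [hlabel]
    exact (Adj.reachable (G := (coronaGraph H H').induce Tᶜ) (u := ⟨_, hu⟩) (v := ⟨_, ha⟩)
      rfl).trans (hinl a ha)

theorem reachable_of_coronaLabel_eq ⦃u v : ↥Tᶜ⦄
    (h : coronaLabel H H' T u = coronaLabel H H' T v) :
    ((coronaGraph H H').induce Tᶜ).Reachable u v :=
  (reachable_coronaLabelRep u).trans (h ▸ (reachable_coronaLabelRep v).symm)

open Classical in
theorem nc_coronaGraph_compl [Fintype V₁] [Finite V₂] (T : Set (V₁ ⊕ V₁ × V₂)) :
    nc (coronaGraph H H') Tᶜ =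
      nc H {a | Sum.inl a ∉ T} + ∑ a : {a // Sum.inl a ∈ T}, nc H' {y | Sum.inr (a.1, y) ∉ T} := by
  rw [nc, card_connectedComponent_eq coronaLabel_eq_of_adj reachable_of_coronaLabel_eq
    (fun i => ⟨_, coronaLabel_coronaLabelRep i⟩), Nat.card_sum, Nat.card_sigma]
  rfl

theorem reachable_copy_of_reachable {a : V₁} (ha : Sum.inl a ∈ T) {y z : V₂}
    (hy : Sum.inr (a, y) ∉ T) (hz : Sum.inr (a, z) ∉ T)
    (h : ((coronaGraph H H').induce Tᶜ).Reachable ⟨_, hy⟩ ⟨_, hz⟩) :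
    (H'.induce {y | Sum.inr (a, y) ∉ T}).Reachable ⟨y, hy⟩ ⟨z, hz⟩ := by
  have := h.eq_of_forall_adj coronaLabel_eq_of_adj
  simp only [coronaLabel, dif_pos ha, Sum.inr.injEq, Sigma.mk.inj_iff, heq_eq_eq, true_and] at this
  exact ConnectedComponent.exact this

theorem nc_coronaGraph_compl_image_inl [Fintype V₁] [Finite V₂] (A : Set V₁) :
    nc (coronaGraph H H') (Sum.inl '' A)ᶜ = nc H Aᶜ + A.ncard * nc H' univ := by
  have hroots : {a | Sum.inl a ∉ (Sum.inl '' A : Set (V₁ ⊕ V₁ × V₂))} = Aᶜ := by ext; simp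
  have hcopies : ∀ a, {y | Sum.inr (a, y) ∉ (Sum.inl '' A : Set (V₁ ⊕ V₁ × V₂))} = univ := by
    intro a; ext; simp
  rw [nc_coronaGraph_compl, hroots]
  simp only [hcopies, Finset.sum_const, Finset.card_univ, smul_eq_mul, Fintype.card_eq_nat_card]
  congr 2
  exact (Nat.card_congr (Equiv.subtypeEquivRight fun a => by simp)).trans (Nat.card_coe_set_eq A)

theorem nc_coronaGraph_compl_range_inl_union [Fintype V₁] [Finite V₂] (B : Set V₂) :
    nc (coronaGraph H H') (range Sum.inl ∪ Sum.inr '' (univ ×ˢ B))ᶜ =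
      Fintype.card V₁ * nc H' Bᶜ := by
  have hroots : {a | Sum.inl a ∉ (range Sum.inl ∪ Sum.inr '' (univ ×ˢ B) : Set (V₁ ⊕ V₁ × V₂))} =
      ∅ := by ext; simp
  have hcopies : ∀ a, {y | Sum.inr (a, y) ∉
      (range Sum.inl ∪ Sum.inr '' (univ ×ˢ B) : Set (V₁ ⊕ V₁ × V₂))} = Bᶜ := by
    intro a; ext; simp
  rw [nc_coronaGraph_compl, hroots, nc_empty, zero_add]
  simp only [hcopies, Finset.sum_const, Finset.card_univ, smul_eq_mul, Fintype.card_eq_nat_card]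
  congr 1
  exact Nat.card_congr (Equiv.subtypeUnivEquiv fun a => by simp)

end Corona

/-- Rauf–Rinaldo's combinatorial characterisation of the unmixedness of the binomial edge
ideal `J_G`: `c_G(T) = |T| + 1` for every `T ∈ 𝒞(G)`. -/
def IsUnmixed {V : Type*} (G : SimpleGraph V) : Prop :=
  ∀ T : Set V, CutPointProperty G T → nc G Tᶜ = T.ncard + 1

section Unmixed

variable {V₁ V₂ : Type*} {H : SimpleGraph V₁} {H' : SimpleGraph V₂}

theorem isClique_coronaGraph_top_insert_inl_range (a : V₁) :
    (coronaGraph H (⊤ : SimpleGraph V₂)).IsClique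
      (insert (Sum.inl a) (range fun y => Sum.inr (a, y))) := by
  rintro _ (rfl | ⟨y, rfl⟩) _ (rfl | ⟨z, rfl⟩) hne
  · exact (hne rfl).elim
  · exact rfl
  · exact rfl
  · exact ⟨rfl, fun h => hne (congrArg (fun y => Sum.inr (a, y)) h)⟩

theorem isUnmixed_coronaGraph_top [Fintype V₁] [Finite V₂] [Nonempty V₁] [Nonempty V₂] :
    IsUnmixed (coronaGraph (⊤ : SimpleGraph V₁) (⊤ : SimpleGraph V₂)) := by
  intro T hT
  -- a vertex of a copy is simplicial, and so is a root once all other roots are deleted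
  have hinr : ∀ p : V₁ × V₂, Sum.inr p ∉ T := by
    rintro ⟨a, y⟩ hp
    refine hT.not_isClique hp ((isClique_coronaGraph_top_insert_inl_range a).subset ?_)
    rintro (b | ⟨b, z⟩) ⟨hadj, -⟩
    · obtain rfl : a = b := hadj
      exact .inl rfl
    · obtain ⟨rfl, -⟩ : a = b ∧ _ := hadj
      exact .inr ⟨z, rfl⟩
  obtain ⟨a₀, ha₀⟩ : ∃ a, Sum.inl a ∉ T := by
    by_contra! hall
    obtain ⟨a⟩ := ‹Nonempty V₁›
    refine hT.not_isClique (hall a) ((isClique_coronaGraph_top_insert_inl_range a).subset ?_)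
    rintro (b | ⟨b, z⟩) ⟨hadj, hb⟩
    · exact (hb (hall b)).elim
    · obtain rfl : a = b := hadj
      exact .inr ⟨z, rfl⟩
  have hT_eq : T = Sum.inl '' {a | Sum.inl a ∈ T} := by
    ext (a | p) <;> simp [hinr]
  rw [hT_eq, nc_coronaGraph_compl_image_inl, ncard_image_of_injective _ Sum.inl_injective,
    nc_top ⟨a₀, ha₀⟩, nc_top univ_nonempty, mul_one, add_comm]

theorem IsUnmixed.eq_top_left [Fintype V₁] [Finite V₂] [Nonempty V₂]
    (h : IsUnmixed (coronaGraph H H')) : H = ⊤ := by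
  by_contra hne
  obtain ⟨a₁, a₂, hne, hnadj⟩ := ne_top_iff_exists_not_adj.mp hne
  obtain ⟨A, ha₁, ha₂, hsep, hmin⟩ := exists_minimal_separator hne hnadj
  have hm : 1 ≤ nc H' univ := one_le_nc univ_nonempty
  have hcut : CutPointProperty (coronaGraph H H') (Sum.inl '' A) := by
    rintro _ ⟨x, hx, rfl⟩
    have hcompl : (Sum.inl '' A)ᶜ ∪ {Sum.inl x} =
        (Sum.inl '' (A \ {x}) : Set (V₁ ⊕ V₁ × V₂))ᶜ := by
      ext (a | p) <;> simp [or_comm, imp_iff_not_or]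
    have hlt := nc_union_singleton_lt ha₁ ha₂ (hmin x hx) hsep
    rw [union_comm, ← compl_sdiff] at hlt
    rw [hcompl, nc_coronaGraph_compl_image_inl, nc_coronaGraph_compl_image_inl,
      ← ncard_sdiff_singleton_add_one hx, add_mul, one_mul]
    omega
  have hcount := h _ hcut
  rw [nc_coronaGraph_compl_image_inl, ncard_image_of_injective _ Sum.inl_injective] at hcount
  have h2 : 1 < nc H Aᶜ := one_lt_nc_of_not_reachable hsep
  have : A.ncard ≤ A.ncard * nc H' univ := Nat.le_mul_of_pos_right _ hm
  omega

theorem IsUnmixed.eq_top_right [Fintype V₁] [Finite V₂] (hn₁ : 2 ≤ Fintype.card V₁)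
    (h : IsUnmixed (coronaGraph H H')) : H' = ⊤ := by
  by_contra hne
  obtain ⟨b₁, b₂, hne, hnadj⟩ := ne_top_iff_exists_not_adj.mp hne
  obtain ⟨B, hb₁, hb₂, hsep, hmin⟩ := exists_minimal_separator hne hnadj
  set T : Set (V₁ ⊕ V₁ × V₂) := range Sum.inl ∪ Sum.inr '' (univ ×ˢ B)
  have hinl : ∀ a, Sum.inl a ∈ T := fun a => .inl ⟨a, rfl⟩
  have hinr : ∀ a y, Sum.inr (a, y) ∈ T ↔ y ∈ B := by simp [T]
  have hb₁' : ∀ a, Sum.inr (a, b₁) ∈ Tᶜ := fun a => mt (hinr a b₁).1 hb₁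
  have hb₂' : ∀ a, Sum.inr (a, b₂) ∈ Tᶜ := fun a => mt (hinr a b₂).1 hb₂
  have hsep' : ∀ a, ¬ ((coronaGraph H H').induce Tᶜ).Reachable ⟨_, hb₁' a⟩ ⟨_, hb₂' a⟩ :=
    fun a hr => hsep <| (reachable_copy_of_reachable (hinl a) _ _ hr).map
      (H'.induceHomOfLE fun y hy => mt (hinr a y).2 hy).toHom
  have hcut : CutPointProperty (coronaGraph H H') T := by
    rintro _ (⟨a, rfl⟩ | ⟨⟨a, y⟩, ⟨-, hy⟩, rfl⟩)
    · refine nc_union_singleton_lt (hb₁' a) (hb₂' a) ?_ (hsep' a)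
      exact (Adj.reachable (G := (coronaGraph H H').induce (Tᶜ ∪ {Sum.inl a}))
        (u := ⟨_, .inl (hb₁' a)⟩) (v := ⟨Sum.inl a, .inr rfl⟩) rfl).trans (Adj.reachable rfl)
    · refine nc_union_singleton_lt (hb₁' a) (hb₂' a) ?_ (hsep' a)
      refine (hmin y hy).map (coronaGraph.inrHom H H' a ?_)
      rintro z (hz | rfl)
      · exact .inl (mt (hinr a z).1 hz)
      · exact .inr rfl
  have hcard : T.ncard = Fintype.card V₁ + Fintype.card V₁ * B.ncard := by
    rw [ncard_union_eq, ncard_range_of_injective Sum.inl_injective,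
      ncard_image_of_injective _ Sum.inr_injective, ncard_prod, ncard_univ,
      Nat.card_eq_fintype_card]
    exact disjoint_left.mpr (by rintro _ ⟨a, rfl⟩ ⟨p, -, hp⟩; cases hp)
  have hcount := h T hcut
  rw [nc_coronaGraph_compl_range_inl_union, hcard] at hcount
  -- `n₁ * c = n₁ * (1 + |B|) + 1` is impossible modulo `n₁ ≥ 2`
  have hdvd : Fintype.card V₁ ∣ 1 :=
    (Nat.dvd_add_right (dvd_add dvd_rfl (dvd_mul_right _ _))).mp (hcount ▸ dvd_mul_right _ _)
  have := Nat.le_of_dvd one_pos hdvd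
  omega

end Unmixed

theorem stmt11_general {V₁ V₂ : Type*} [Fintype V₁] [Fintype V₂]
    (hn₁ : 2 ≤ Fintype.card V₁) (hn₂ : 1 ≤ Fintype.card V₂)
    (H : SimpleGraph V₁) (H' : SimpleGraph V₂) :
    (∀ T : Set (V₁ ⊕ V₁ × V₂), CutPointProperty (coronaGraph H H') T →
        nc (coronaGraph H H') Tᶜ = T.ncard + 1) ↔
      (H = ⊤ ∧ H' = ⊤) := by
  have : Nonempty V₁ := Fintype.card_pos_iff.mp (by omega)
  have : Nonempty V₂ := Fintype.card_pos_iff.mp hn₂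
  refine ⟨fun h => ⟨IsUnmixed.eq_top_left h, IsUnmixed.eq_top_right hn₁ h⟩, ?_⟩
  rintro ⟨rfl, rfl⟩
  exact isUnmixed_coronaGraph_top

/-- the corona of two connected graphs (`n₁ ≥ 2`, `n₂ ≥ 1`) is unmixed
(in the Rauf–Rinaldo sense) iff both graphs are complete. -/
theorem stmt11 {V₁ V₂ : Type*} [Fintype V₁] [Fintype V₂]
    (hn₁ : 2 ≤ Fintype.card V₁) (hn₂ : 1 ≤ Fintype.card V₂)
    (H : SimpleGraph V₁) (H' : SimpleGraph V₂)
    (hH : H.Connected) (hH' : H'.Connected) :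
    (∀ T : Set (V₁ ⊕ V₁ × V₂), CutPointProperty (coronaGraph H H') T →
        nc (coronaGraph H H') Tᶜ = T.ncard + 1) ↔
      (H = ⊤ ∧ H' = ⊤) :=
  stmt11_general hn₁ hn₂ H H'
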